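/- arXiv:1206.4267 — 5 statements merged into one kernel-verified Lean document; each statement's English description precedes it below -/
import Mathlib

section
/- Suppose f : R^m → R^m is increasing and strictly concave with f(0) ≥ 0, f(a) > a for some positive vector a, and f(b) < b for some vector b > a. Then f has a unique positive fixed point. -/
/-- Uniqueness half: any positive fixed point dominates any other. -/
lemma fixed_point_le {m : ℕ}
    (f : (Fin m → ℝ) → (Fin m → ℝ))
    (hmono : ∀ x y : Fin m → ℝ, x ≤ y → f x ≤ f y)
    (hconc : ∀ x y : Fin m → ℝ, x ≠ y → ∀ t : ℝ, 0 < t → t < 1 →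
      ∀ i, t * f x i + (1 - t) * f y i < f (t • x + (1 - t) • y) i)
    (h0 : (0 : Fin m → ℝ) ≤ f 0)
    (u v : Fin m → ℝ) (hu : ∀ i, 0 < u i) (hv : ∀ i, 0 < v i)
    (hfu : f u = u) (hfv : f v = v) : v ≤ u := by
  rcases isEmpty_or_nonempty (Fin m) with hE | hN
  · intro i; exact (hE.false i).elim
  · set c := Finset.univ.inf' (Finset.univ_nonempty) (fun i => u i / v i) with hc
    have hcle : ∀ i, c ≤ u i / v i := fun i =>
      Finset.inf'_le _ (Finset.mem_univ i)
    obtain ⟨j, -, hj⟩ := Finset.exists_mem_eq_inf' (Finset.univ_nonempty)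
      (fun i => u i / v i)
    have hcpos : 0 < c := by rw [hc, hj]; exact div_pos (hu j) (hv j)
    have hcv : ∀ i, c * v i ≤ u i := fun i => (le_div_iff₀ (hv i)).mp (hcle i)
    by_cases hc1 : 1 ≤ c
    · intro i
      have := (one_le_div (hv i)).mp (le_trans hc1 (hcle i))
      exact this
    · push_neg at hc1
      exfalso
      have hvne : v ≠ (0 : Fin m → ℝ) := by
        intro h
        exact absurd (congrFun h j) (hv j).ne'
      have key := hconc v 0 hvne c hcpos hc1 j
      have hsm : c • v + (1 - c) • (0 : Fin m → ℝ) = c • v := by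
        simp
      rw [hsm] at key
      have h1 : c * v j ≤ c * f v j + (1 - c) * f 0 j := by
        have : 0 ≤ (1 - c) * f 0 j :=
          mul_nonneg (by linarith) (h0 j)
        rw [hfv]; linarith
      have h2 : f (c • v) j ≤ u j := by
        have hle : c • v ≤ u := fun i => by
          simpa using hcv i
        have := hmono _ _ hle
        rw [hfu] at this
        exact this j
      have h3 : u j = c * v j := by
        rw [hc, hj, div_mul_cancel₀ _ (hv j).ne']
      linarith
/-- Tarski-type fixed point theorem for increasing strictly concave maps:
if `f : ℝ^m → ℝ^m` is increasing and strictly concave, `f 0 ≥ 0`,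
`f a > a` for some positive vector `a` and `f b < b` for some `b > a`,
then `f` has a unique positive fixed point. -/
theorem unique_positive_fixed_point_of_concave {m : ℕ}
    (f : (Fin m → ℝ) → (Fin m → ℝ))
    (hmono : ∀ x y : Fin m → ℝ, x ≤ y → f x ≤ f y)
    (hconc : ∀ x y : Fin m → ℝ, x ≠ y → ∀ t : ℝ, 0 < t → t < 1 →
      ∀ i, t * f x i + (1 - t) * f y i < f (t • x + (1 - t) • y) i)
    (h0 : (0 : Fin m → ℝ) ≤ f 0)
    (a : Fin m → ℝ) (ha : ∀ i, 0 < a i) (hfa : ∀ i, a i < f a i)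
    (b : Fin m → ℝ) (hab : ∀ i, a i < b i) (hfb : ∀ i, f b i < b i) :
    ∃! v : Fin m → ℝ, (∀ i, 0 < v i) ∧ f v = v := by
  set S : Set (Fin m → ℝ) := {x | a ≤ x ∧ x ≤ f x ∧ x ≤ b} with hS
  have haS : a ∈ S := ⟨le_refl a, fun i => (hfa i).le, fun i => (hab i).le⟩
  have hne : S.Nonempty := ⟨a, haS⟩
  have hbdd : BddAbove S := ⟨b, fun x hx => hx.2.2⟩
  set v := sSup S with hv
  have hav : a ≤ v := le_csSup hbdd haS
  have hvb : v ≤ b := csSup_le hne (fun x hx => hx.2.2)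
  have hvfv : v ≤ f v := csSup_le hne (fun x hx =>
    le_trans hx.2.1 (hmono x v (le_csSup hbdd hx)))
  have hfvS : f v ∈ S := by
    refine ⟨le_trans (fun i => (hfa i).le) (hmono a v hav),
      hmono v (f v) hvfv, le_trans (hmono v b hvb) (fun i => (hfb i).le)⟩
  have hfix : f v = v := le_antisymm (le_csSup hbdd hfvS) hvfv
  have hvpos : ∀ i, 0 < v i := fun i => lt_of_lt_of_le (ha i) (hav i)
  refine ⟨v, ⟨hvpos, hfix⟩, ?_⟩
  rintro u ⟨hupos, hufix⟩
  exact le_antisymm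
    (fixed_point_le f hmono hconc h0 v u hvpos hupos hfix hufix)
    (fixed_point_le f hmono hconc h0 u v hupos hvpos hufix hfix)
end

section
/- For each i in {1,...,m} and h ≥ 1, define γ_i^h by γ_i^1 = d_i and γ_i^h = Σ_j d_{ij} γ_j^{h-1}/(1+γ_j^{h-1}). Then each sequence (γ_i^h)_h converges to a limit Υ_i, and the limit vector Υ = (Υ_1,...,Υ_m) satisfies the fixed point equation Υ_i = Σ_j d_{ij} Υ_j/(1+Υ_j). -/
/-- The sequences `γ_i^h` defined by `γ_i^1 = d_i` and
`γ_i^h = Σ_j d_{ij} γ_j^{h-1}/(1+γ_j^{h-1})` converge, and the limit vector `Υ`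
satisfies the fixed point equation `Υ_i = Σ_j d_{ij} Υ_j/(1+Υ_j)`. -/
theorem gamma_converges_to_fixed_point {m : ℕ}
    (d : Fin m → Fin m → ℕ) (hd : ∀ i, 1 ≤ ∑ j, d i j)
    (γ : ℕ → Fin m → ℝ)
    (hinit : ∀ i, γ 1 i = ∑ j, (d i j : ℝ))
    (hrec : ∀ h, 2 ≤ h → ∀ i,
      γ h i = ∑ j, (d i j : ℝ) * γ (h - 1) j / (1 + γ (h - 1) j)) :
    ∃ Υ : Fin m → ℝ, ∀ i,
      Filter.Tendsto (fun h => γ h i) Filter.atTop (nhds (Υ i)) ∧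
      Υ i = ∑ j, (d i j : ℝ) * Υ j / (1 + Υ j) := by
  -- nonnegativity
  have key : ∀ h : ℕ, ∀ i, 0 ≤ γ (h + 1) i := by
    intro h
    induction h with
    | zero =>
      intro i; rw [hinit]; positivity
    | succ n ih =>
      intro i
      rw [show n + 1 + 1 = n + 2 from rfl, hrec (n + 2) (by omega) i]
      apply Finset.sum_nonneg
      intro j _
      have h0 : 0 ≤ γ (n + 2 - 1) j := ih j
      apply div_nonneg
      · exact mul_nonneg (Nat.cast_nonneg _) h0
      · linarith
  -- monotone decreasing
  have mono : ∀ h : ℕ, ∀ i, γ (h + 2) i ≤ γ (h + 1) i := by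
    intro h
    induction h with
    | zero =>
      intro i
      rw [hrec 2 le_rfl i, hinit]
      apply Finset.sum_le_sum
      intro j _
      have h0 : 0 ≤ γ (2 - 1) j := key 0 j
      rw [mul_div_assoc]
      have h1 : γ (2 - 1) j / (1 + γ (2 - 1) j) ≤ 1 := by
        rw [div_le_one (by linarith)]; linarith
      calc (d i j : ℝ) * (γ (2 - 1) j / (1 + γ (2 - 1) j))
          ≤ (d i j : ℝ) * 1 :=
            mul_le_mul_of_nonneg_left h1 (Nat.cast_nonneg _)
        _ = (d i j : ℝ) := mul_one _
    | succ n ih =>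
      intro i
      rw [hrec (n + 1 + 2) (by omega) i, hrec (n + 1 + 1) (by omega) i]
      apply Finset.sum_le_sum
      intro j _
      have h0 : 0 ≤ γ (n + 1 + 2 - 1) j := key (n + 1) j
      have h1 : γ (n + 1 + 2 - 1) j ≤ γ (n + 1 + 1 - 1) j := ih j
      rw [mul_div_assoc, mul_div_assoc]
      apply mul_le_mul_of_nonneg_left _ (Nat.cast_nonneg _)
      rw [div_le_div_iff₀ (by linarith) (by linarith)]
      nlinarith
  have hant : ∀ i, Antitone fun h => γ (h + 1) i := fun i =>
    antitone_nat_of_succ_le (fun n => mono n i)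
  have hb : ∀ i, BddBelow (Set.range fun h => γ (h + 1) i) := fun i =>
    ⟨0, by rintro x ⟨h, rfl⟩; exact key h i⟩
  set Υ : Fin m → ℝ := fun i => ⨅ h : ℕ, γ (h + 1) i with hΥ
  have hconv : ∀ i, Filter.Tendsto (fun h => γ (h + 1) i) Filter.atTop (nhds (Υ i)) :=
    fun i => tendsto_atTop_ciInf (hant i) (hb i)
  have hΥnn : ∀ j, 0 ≤ Υ j := fun j => le_ciInf fun h => key h j
  have hconv' : ∀ i, Filter.Tendsto (fun h => γ h i) Filter.atTop (nhds (Υ i)) := by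
    intro i
    exact (Filter.tendsto_add_atTop_iff_nat (f := fun h => γ h i) 1).mp (hconv i)
  refine ⟨Υ, fun i => ⟨hconv' i, ?_⟩⟩
  have t1 : Filter.Tendsto (fun h => γ (h + 2) i) Filter.atTop (nhds (Υ i)) :=
    (Filter.tendsto_add_atTop_iff_nat (f := fun h => γ h i) 2).mpr (hconv' i)
  have t2 : Filter.Tendsto
      (fun h => ∑ j, (d i j : ℝ) * γ (h + 1) j / (1 + γ (h + 1) j))
      Filter.atTop (nhds (∑ j, (d i j : ℝ) * Υ j / (1 + Υ j))) := by
    apply tendsto_finset_sum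
    intro j _
    have hne : (1 : ℝ) + Υ j ≠ 0 := by have := hΥnn j; positivity
    exact Filter.Tendsto.div ((hconv j).const_mul _)
      (Filter.Tendsto.const_add 1 (hconv j)) hne
  have heq : (fun h => γ (h + 2) i)
      = fun h => ∑ j, (d i j : ℝ) * γ (h + 1) j / (1 + γ (h + 1) j) := by
    funext h
    rw [hrec (h + 2) (by omega) i]
    norm_num
  rw [heq] at t1
  exact tendsto_nhds_unique t1 t2
end

section
/- Let D be a nonnegative irreducible m×m matrix with spectral radius ρ(D) > 1. Then the function f : R^m → R^m given by f_i(x) = Σ_j d_{ij} x_j/(1+x_j) has a strictly positive fixed point, i.e. there exists a vector Υ with all entries positive such that Υ_i = Σ_j d_{ij} Υ_j/(1+Υ_j) for all i. -/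
lemma exists_eigenvector_of_mem_spectrum {m : ℕ} (A : Matrix (Fin m) (Fin m) ℂ) (μ : ℂ)
    (h : μ ∈ spectrum ℂ A) : ∃ w : Fin m → ℂ, w ≠ 0 ∧ A.mulVec w = μ • w := by
  rw [spectrum.mem_iff] at h
  have hdet : (algebraMap ℂ (Matrix (Fin m) (Fin m) ℂ) μ - A).det = 0 := by
    by_contra hne
    exact h ((Matrix.isUnit_iff_isUnit_det _).mpr (isUnit_iff_ne_zero.mpr hne))
  obtain ⟨v, hv, hmv⟩ := (Matrix.exists_mulVec_eq_zero_iff).mpr hdet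
  refine ⟨v, hv, ?_⟩
  have h3 : (algebraMap ℂ (Matrix (Fin m) (Fin m) ℂ) μ).mulVec v - A.mulVec v = 0 := by
    rw [← Matrix.sub_mulVec]; exact hmv
  have h2 : (algebraMap ℂ (Matrix (Fin m) (Fin m) ℂ) μ).mulVec v = μ • v := by
    simp [Algebra.algebraMap_eq_smul_one, Matrix.smul_mulVec]
  rw [h2] at h3
  exact (sub_eq_zero.mp h3).symm

/-- If `D` is a nonnegative irreducible matrix with spectral radius `ρ(D) > 1`
(i.e. some eigenvalue has absolute value `> 1`), then the map
`f_i(x) = Σ_j d_{ij} x_j/(1+x_j)` has a strictly positive fixed point. -/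
theorem positive_fixed_point_of_irreducible {m : ℕ}
    (D : Matrix (Fin m) (Fin m) ℝ) (hD : ∀ i j, 0 ≤ D i j)
    (hirr : ∀ i j, ∃ n : ℕ, 0 < n ∧ 0 < (D ^ n) i j)
    (hρ : ∃ μ ∈ spectrum ℂ (D.map (Complex.ofReal)), 1 < ‖μ‖) :
    ∃ Υ : Fin m → ℝ, (∀ i, 0 < Υ i) ∧
      ∀ i, Υ i = ∑ j, D i j * Υ j / (1 + Υ j) := by
  obtain ⟨μ, hμs, hμ⟩ := hρ
  obtain ⟨w, hw0, hww⟩ := exists_eigenvector_of_mem_spectrum _ μ hμs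
  set M := ‖μ‖ with hMdef
  have hM1 : (1 : ℝ) < M := hμ
  have hM0 : (0 : ℝ) < M := by linarith
  set x : Fin m → ℝ := fun j => ‖w j‖ with hxdef
  have hx0 : ∀ j, 0 ≤ x j := fun j => norm_nonneg _
  -- key Perron-type inequality from the eigenvector
  have hkey : ∀ i, M * x i ≤ ∑ j, D i j * x j := by
    intro i
    have h1 : (D.map Complex.ofReal).mulVec w i = μ * w i := by
      rw [hww]; simp
    calc M * x i = ‖μ * w i‖ := by rw [norm_mul]
      _ = ‖∑ j, ((D i j : ℂ)) * w j‖ := by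
          rw [← h1]; simp [Matrix.mulVec, dotProduct, Matrix.map_apply]
      _ ≤ ∑ j, ‖((D i j : ℂ)) * w j‖ := norm_sum_le _ _
      _ = ∑ j, D i j * x j := by
          refine Finset.sum_congr rfl fun j _ => ?_
          rw [norm_mul, Complex.norm_real, Real.norm_eq_abs, abs_of_nonneg (hD i j)]
  -- choose scaling
  set X : ℝ := ∑ j, x j with hXdef
  have hX0 : 0 ≤ X := Finset.sum_nonneg fun j _ => hx0 j
  have hxleX : ∀ j, x j ≤ X :=
    fun j => Finset.single_le_sum (fun l _ => hx0 l) (Finset.mem_univ j)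
  set ε : ℝ := (M - 1) / (X + 1) with hεdef
  have hε : 0 < ε := div_pos (by linarith) (by linarith)
  set u0 : Fin m → ℝ := fun j => ε * x j with hu0def
  have hu00 : ∀ j, 0 ≤ u0 j := fun j => mul_nonneg hε.le (hx0 j)
  have hsmall : ∀ j, 1 + u0 j ≤ M := by
    intro j
    have : ε * x j ≤ M - 1 := by
      rw [hεdef, div_mul_eq_mul_div, div_le_iff₀ (by linarith)]
      nlinarith [hxleX j, hx0 j]
    simp only [hu0def]; linarith
  -- the iteration map
  set f : (Fin m → ℝ) → Fin m → ℝ := fun y i => ∑ j, D i j * (y j / (1 + y j)) with hfdef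
  have gmono : ∀ a b : ℝ, 0 ≤ a → a ≤ b → a / (1 + a) ≤ b / (1 + b) := by
    intro a b ha hab
    rw [div_le_div_iff₀ (by linarith) (by linarith)]
    nlinarith
  have fnonneg : ∀ y : Fin m → ℝ, (∀ j, 0 ≤ y j) → ∀ i, 0 ≤ f y i := by
    intro y hy i
    exact Finset.sum_nonneg fun j _ =>
      mul_nonneg (hD i j) (div_nonneg (hy j) (by linarith [hy j]))
  have fmono : ∀ y z : Fin m → ℝ, (∀ j, 0 ≤ y j) → (∀ j, y j ≤ z j) → ∀ i, f y i ≤ f z i := by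
    intro y z hy hyz i
    exact Finset.sum_le_sum fun j _ =>
      mul_le_mul_of_nonneg_left (gmono _ _ (hy j) (hyz j)) (hD i j)
  -- subsolution
  have hsub : ∀ i, u0 i ≤ f u0 i := by
    intro i
    have step1 : ∀ j, u0 j / M ≤ u0 j / (1 + u0 j) := by
      intro j
      apply div_le_div_of_nonneg_left (hu00 j) (by linarith [hu00 j]) (hsmall j)
    calc u0 i = (ε / M) * (M * x i) := by simp only [hu0def]; field_simp
      _ ≤ (ε / M) * ∑ j, D i j * x j :=
          mul_le_mul_of_nonneg_left (hkey i) (by positivity)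
      _ = ∑ j, D i j * (u0 j / M) := by
          rw [Finset.mul_sum]; refine Finset.sum_congr rfl fun j _ => ?_
          simp only [hu0def]; ring
      _ ≤ ∑ j, D i j * (u0 j / (1 + u0 j)) :=
          Finset.sum_le_sum fun j _ => mul_le_mul_of_nonneg_left (step1 j) (hD i j)
  -- iterate
  set u : ℕ → Fin m → ℝ := fun n => f^[n] u0 with hudef
  have hu : ∀ n, u (n + 1) = f (u n) := fun n => Function.iterate_succ_apply' f n u0
  have hupos : ∀ n j, 0 ≤ u n j := by
    intro n
    induction n with
    | zero => exact hu00
    | succ n ih => rw [hu]; exact fnonneg _ ih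
  have hstep : ∀ n i, u n i ≤ u (n + 1) i := by
    intro n
    induction n with
    | zero => exact fun i => (hu 0) ▸ hsub i
    | succ n ih =>
        intro i
        rw [hu, hu]
        exact fmono _ _ (hupos n) ih i
  have hmon : ∀ i, Monotone fun n => u n i := fun i => monotone_nat_of_le_succ fun n => hstep n i
  have hbound : ∀ n i, u n i ≤ ∑ j, D i j := by
    intro n i
    calc u n i ≤ u (n + 1) i := hstep n i
      _ = f (u n) i := by rw [hu]
      _ ≤ ∑ j, D i j * 1 := by
          refine Finset.sum_le_sum fun j _ => mul_le_mul_of_nonneg_left ?_ (hD i j)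
          rw [div_le_one (by linarith [hupos n j])]
          linarith [hupos n j]
      _ = ∑ j, D i j := by simp
  set Υ : Fin m → ℝ := fun i => ⨆ n, u n i with hΥdef
  have hbdd : ∀ i, BddAbove (Set.range fun n => u n i) := by
    intro i
    exact ⟨∑ j, D i j, by rintro _ ⟨n, rfl⟩; exact hbound n i⟩
  have htend : ∀ i, Filter.Tendsto (fun n => u n i) Filter.atTop (nhds (Υ i)) :=
    fun i => tendsto_atTop_ciSup (hmon i) (hbdd i)
  have hle : ∀ n i, u n i ≤ Υ i := fun n i => le_ciSup (hbdd i) n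
  have hΥ0 : ∀ i, 0 ≤ Υ i := fun i => le_trans (hupos 0 i) (hle 0 i)
  -- fixed point equation
  have hfix : ∀ i, Υ i = ∑ j, D i j * (Υ j / (1 + Υ j)) := by
    intro i
    have h1 : Filter.Tendsto (fun n => u (n + 1) i) Filter.atTop (nhds (Υ i)) :=
      (htend i).comp (Filter.tendsto_add_atTop_nat 1)
    have h1' : Filter.Tendsto (fun n => f (u n) i) Filter.atTop (nhds (Υ i)) :=
      h1.congr fun n => congrFun (hu n) i
    have h2 : Filter.Tendsto (fun n => f (u n) i) Filter.atTop
        (nhds (∑ j, D i j * (Υ j / (1 + Υ j)))) := by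
      apply tendsto_finset_sum
      intro j _
      have hden : Filter.Tendsto (fun n => 1 + u n j) Filter.atTop (nhds (1 + Υ j)) :=
        tendsto_const_nhds.add (htend j)
      have hne : (1 : ℝ) + Υ j ≠ 0 := by linarith [hΥ0 j]
      exact ((htend j).div hden hne).const_mul _
    exact tendsto_nhds_unique h1' h2
  -- positivity via irreducibility
  have hΥterm : ∀ i l, 0 ≤ D i l * (Υ l / (1 + Υ l)) :=
    fun i l => mul_nonneg (hD i l) (div_nonneg (hΥ0 l) (by linarith [hΥ0 l]))
  have hDpow : ∀ n i j, 0 ≤ (D ^ n) i j := by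
    intro n
    induction n with
    | zero =>
        intro i j
        rcases eq_or_ne i j with rfl | h
        · simp [Matrix.one_apply]
        · simp [Matrix.one_apply, h]
    | succ n ih =>
        intro i j
        rw [pow_succ, Matrix.mul_apply]
        exact Finset.sum_nonneg fun l _ => mul_nonneg (ih i l) (hD l j)
  have hchain : ∀ n, ∀ i k : Fin m, 0 < (D ^ n) i k → 0 < Υ k → 0 < Υ i := by
    intro n
    induction n with
    | zero =>
        intro i k h hk
        rcases eq_or_ne i k with rfl | hik
        · exact hk
        · simp [Matrix.one_apply, hik] at h
    | succ n ih =>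
        intro i k h hk
        rw [pow_succ', Matrix.mul_apply] at h
        have hex : ∃ j, 0 < D i j * (D ^ n) j k := by
          by_contra hc
          push_neg at hc
          exact absurd (Finset.sum_nonpos fun j _ => hc j) (not_le.mpr h)
        obtain ⟨j, hj⟩ := hex
        have hD1 : 0 < D i j := by
          rcases (hD i j).lt_or_eq with h' | h'
          · exact h'
          · exfalso; rw [← h', zero_mul] at hj; exact lt_irrefl 0 hj
        have hD2 : 0 < (D ^ n) j k := by
          rcases (hDpow n j k).lt_or_eq with h' | h'
          · exact h'
          · exfalso; rw [← h', mul_zero] at hj; exact lt_irrefl 0 hj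
        have hΥj : 0 < Υ j := ih j k hD2 hk
        rw [hfix i]
        refine Finset.sum_pos' (fun l _ => hΥterm i l) ⟨j, Finset.mem_univ j, ?_⟩
        exact mul_pos hD1 (div_pos hΥj (by linarith))
  obtain ⟨k, hk⟩ := Function.ne_iff.mp hw0
  have hxk : 0 < x k := norm_pos_iff.mpr hk
  have hΥk : 0 < Υ k := lt_of_lt_of_le (mul_pos hε hxk) (hle 0 k)
  refine ⟨Υ, ?_, ?_⟩
  · intro i
    obtain ⟨n, _, hn⟩ := hirr i k
    exact hchain n i k hn hΥk
  · intro i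
    rw [hfix i]
    exact Finset.sum_congr rfl fun j _ => (mul_div_assoc _ _ _).symm
end

section
/- For the Fibonacci recursion γ_1^h = γ_2^{h-1}/(1+γ_2^{h-1}), γ_2^h = γ_1^{h-1}/(1+γ_1^{h-1}) + γ_2^{h-1}/(1+γ_2^{h-1}) with initial values γ_1^1 = 1, γ_2^1 = 2, the limits exist and equal lim_{h→∞} γ_1^h = √2 − 1 and lim_{h→∞} γ_2^h = √2/2. -/
/-!
Shifting the index, the pair `(γ_1, γ_2)` is the orbit of `(x, y) ↦ (f y, f x + f y)` with
`f t = t / (1 + t)`, whose fixed point is `(√2 - 1, √2 / 2)`. The orbit stays in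
`[1/3, ∞) × [1/2, ∞)`, where `f` is `1/(1 + m)^2`-Lipschitz on `[m, ∞)`; hence the
`ℓ¹`-distance to the fixed point shrinks by the factor `max (9/16) (8/9) = 8/9` at each step.
-/

open Filter Topology

lemma abs_div_one_add_sub_div_one_add_le {x y m : ℝ} (hm : 0 ≤ m) (hx : m ≤ x) (hy : m ≤ y) :
    |x / (1 + x) - y / (1 + y)| ≤ |x - y| / (1 + m) ^ 2 := by
  have hx' : 0 < 1 + x := by linarith
  have hy' : 0 < 1 + y := by linarith
  have hsub : x / (1 + x) - y / (1 + y) = (x - y) / ((1 + x) * (1 + y)) := by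
    field_simp
    ring
  rw [hsub, abs_div, abs_of_pos (mul_pos hx' hy')]
  exact div_le_div_of_nonneg_left (abs_nonneg _) (by positivity) (by nlinarith)

lemma tendsto_zero_of_le_mul_of_lt_one {e : ℕ → ℝ} {c : ℝ} (he : ∀ n, 0 ≤ e n) (hc₀ : 0 ≤ c)
    (hc₁ : c < 1) (hstep : ∀ n, e (n + 1) ≤ c * e n) : Tendsto e atTop (𝓝 0) := by
  have hgeom : Tendsto (fun n => c ^ n * e 0) atTop (𝓝 0) := by
    simpa using (tendsto_pow_atTop_nhds_zero_of_lt_one hc₀ hc₁).mul_const (e 0)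
  exact squeeze_zero he (fun n => le_geom hc₀ n fun k _ => hstep k) hgeom

lemma one_third_lt_sqrt_two_sub_one : 1 / 3 < √2 - 1 := by
  have : (4 / 3 : ℝ) < √2 := by
    rw [Real.lt_sqrt (by norm_num)]
    norm_num
  linarith

lemma one_half_lt_sqrt_two_div_two : 1 / 2 < √2 / 2 := by
  have : (1 : ℝ) < √2 := by
    rw [Real.lt_sqrt (by norm_num)]
    norm_num
  linarith

lemma sqrt_two_div_two_div_one_add : √2 / 2 / (1 + √2 / 2) = √2 - 1 := by
  have hs : √2 ^ 2 = 2 := Real.sq_sqrt (by norm_num)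
  field_simp
  nlinarith

lemma sqrt_two_sub_one_div_one_add : (√2 - 1) / (1 + (√2 - 1)) = √2 / 2 - (√2 - 1) := by
  have hs : √2 ^ 2 = 2 := Real.sq_sqrt (by norm_num)
  have hpos : 0 < √2 := by positivity
  rw [add_sub_cancel, div_eq_iff hpos.ne']
  nlinarith

lemma fib_step_lower_bounds {x y : ℝ} (hx : 1 / 3 ≤ x) (hy : 1 / 2 ≤ y) :
    1 / 3 ≤ y / (1 + y) ∧ 1 / 2 ≤ x / (1 + x) + y / (1 + y) := by
  have hfx : 1 / 4 ≤ x / (1 + x) := by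
    rw [le_div_iff₀ (by linarith)]
    linarith
  have hfy : 1 / 3 ≤ y / (1 + y) := by
    rw [le_div_iff₀ (by linarith)]
    linarith
  exact ⟨hfy, by linarith⟩

lemma fib_step_dist_le {x y : ℝ} (hx : 1 / 3 ≤ x) (hy : 1 / 2 ≤ y) :
    |y / (1 + y) - (√2 - 1)| + |x / (1 + x) + y / (1 + y) - √2 / 2| ≤
      8 / 9 * (|x - (√2 - 1)| + |y - √2 / 2|) := by
  have ha := one_third_lt_sqrt_two_sub_one
  have hb := one_half_lt_sqrt_two_div_two
  have hfa := sqrt_two_sub_one_div_one_add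
  have hfb := sqrt_two_div_two_div_one_add
  set a := √2 - 1
  set b := √2 / 2
  have hfy : |y / (1 + y) - a| ≤ |y - b| / (1 + 1 / 2) ^ 2 := by
    rw [← hfb]
    exact abs_div_one_add_sub_div_one_add_le (by norm_num) hy hb.le
  have hfx : |x / (1 + x) - a / (1 + a)| ≤ |x - a| / (1 + 1 / 3) ^ 2 :=
    abs_div_one_add_sub_div_one_add_le (by norm_num) hx ha.le
  -- the fixed point equation `b = f a + f b` splits the second error into two `f`-differences
  have hsecond : |x / (1 + x) + y / (1 + y) - b| ≤
      |x / (1 + x) - a / (1 + a)| + |y / (1 + y) - a| := by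
    rw [hfa]
    calc |x / (1 + x) + y / (1 + y) - b| = |(x / (1 + x) - (b - a)) + (y / (1 + y) - a)| := by
          congr 1
          ring
      _ ≤ _ := abs_add_le _ _
  norm_num at hfx hfy
  have := abs_nonneg (x - a)
  linarith

theorem tendsto_of_fib_recursion (u v : ℕ → ℝ) (hu₀ : 1 / 3 ≤ u 0) (hv₀ : 1 / 2 ≤ v 0)
    (hu : ∀ n, u (n + 1) = v n / (1 + v n))
    (hv : ∀ n, v (n + 1) = u n / (1 + u n) + v n / (1 + v n)) :
    Tendsto u atTop (𝓝 (√2 - 1)) ∧ Tendsto v atTop (𝓝 (√2 / 2)) := by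
  have hbounds : ∀ n, 1 / 3 ≤ u n ∧ 1 / 2 ≤ v n := by
    intro n
    induction n with
    | zero => exact ⟨hu₀, hv₀⟩
    | succ n ih =>
      rw [hu, hv]
      exact fib_step_lower_bounds ih.1 ih.2
  set e : ℕ → ℝ := fun n => |u n - (√2 - 1)| + |v n - √2 / 2|
  have he : Tendsto e atTop (𝓝 0) := by
    refine tendsto_zero_of_le_mul_of_lt_one (c := 8 / 9) (fun n => by positivity) (by norm_num)
      (by norm_num)
      fun n => ?_
    simp only [e, hu, hv]
    exact fib_step_dist_le (hbounds n).1 (hbounds n).2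
  constructor
  · refine tendsto_iff_norm_sub_tendsto_zero.2 (squeeze_zero (fun _ => norm_nonneg _) ?_ he)
    exact fun n => le_add_of_nonneg_right (abs_nonneg _)
  · refine tendsto_iff_norm_sub_tendsto_zero.2 (squeeze_zero (fun _ => norm_nonneg _) ?_ he)
    exact fun n => le_add_of_nonneg_left (abs_nonneg _)

/-- For the Fibonacci tree recursion
`γ_1^h = γ_2^{h-1}/(1+γ_2^{h-1})`,
`γ_2^h = γ_1^{h-1}/(1+γ_1^{h-1}) + γ_2^{h-1}/(1+γ_2^{h-1})`
with initial values `γ_1^1 = 1`, `γ_2^1 = 2`, the limits exist and equal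
`√2 − 1` and `√2/2` respectively. -/
theorem fibonacci_gamma_limits (γ1 γ2 : ℕ → ℝ)
    (h11 : γ1 1 = 1) (h21 : γ2 1 = 2)
    (hr1 : ∀ h, 2 ≤ h → γ1 h = γ2 (h - 1) / (1 + γ2 (h - 1)))
    (hr2 : ∀ h, 2 ≤ h →
      γ2 h = γ1 (h - 1) / (1 + γ1 (h - 1)) + γ2 (h - 1) / (1 + γ2 (h - 1))) :
    Filter.Tendsto γ1 Filter.atTop (nhds (Real.sqrt 2 - 1)) ∧
    Filter.Tendsto γ2 Filter.atTop (nhds (Real.sqrt 2 / 2)) := by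
  obtain ⟨h1, h2⟩ := tendsto_of_fib_recursion (fun n => γ1 (n + 1)) (fun n => γ2 (n + 1))
    (by norm_num [h11]) (by norm_num [h21])
    (fun n => hr1 (n + 2) (by omega)) (fun n => hr2 (n + 2) (by omega))
  exact ⟨(tendsto_add_atTop_iff_nat 1).1 h1, (tendsto_add_atTop_iff_nat 1).1 h2⟩
end

section
/- Let α, β ≥ 1 be integers with αβ > 1. Define R^h_1 and R^h_2 by the linear recursions R^h_1 = (α+1) R^{h-1}_2 − α R^{h-2}_1 and R^h_2 = (β+1) R^{h-1}_1 − β R^{h-2}_2, with appropriate initial conditions R^1_1 = α+1, R^1_2 = β+1, R^2_1 = (α+1)β + 1, R^2_2 = (β+1)α + 1. Then for all k ≥ 1, R^{2k}_1 = ((αβ)^k − 1)/(αβ − 1) · (α+1)β + 1 and R^{2k+1}_1 = ((αβ)^{k+1} − 1)/(αβ − 1) · (α+1). -/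
/-!
Writing `G k = 1 + αβ + ⋯ + (αβ)^(k-1)`, the pair `(R₁, R₂)` is the solution of the recursion
given by `R₁^{2k} = G k (α+1) β + 1`, `R₁^{2k+1} = G (k+1) (α+1)` and the same formulas with
`α, β` swapped for `R₂`. That these satisfy the recursion is a ring identity once
`G (k+1) = αβ G k + 1` is used, so the closed forms hold over any commutative ring by induction
on `h`; over `ℚ` with `αβ ≠ 1` the geometric sum is `((αβ)^k - 1)/(αβ - 1)`.
-/

open Finset

section

variable {A : Type*} [CommRing A]

def biregularSeq (a b : A) (h : ℕ) : A :=
  if Even h then (∑ i ∈ range (h / 2), (a * b) ^ i) * (a + 1) * b + 1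
  else (∑ i ∈ range (h / 2 + 1), (a * b) ^ i) * (a + 1)

@[simp]
theorem biregularSeq_two_mul (a b : A) (k : ℕ) :
    biregularSeq a b (2 * k) = (∑ i ∈ range k, (a * b) ^ i) * (a + 1) * b + 1 := by
  simp [biregularSeq]

@[simp]
theorem biregularSeq_two_mul_add_one (a b : A) (k : ℕ) :
    biregularSeq a b (2 * k + 1) = (∑ i ∈ range (k + 1), (a * b) ^ i) * (a + 1) := by
  simp [biregularSeq, Nat.add_div_of_dvd_right]

theorem biregularSeq_add_two (a b : A) (h : ℕ) :
    biregularSeq a b (h + 2) = (a + 1) * biregularSeq b a (h + 1) - a * biregularSeq a b h := by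
  obtain ⟨k, rfl | rfl⟩ := Nat.even_or_odd' h
  · rw [show 2 * k + 2 = 2 * (k + 1) by ring]
    simp only [biregularSeq_two_mul, biregularSeq_two_mul_add_one, geom_sum_succ, mul_comm b a]
    ring
  · rw [show 2 * k + 1 + 2 = 2 * (k + 1) + 1 by ring, show 2 * k + 1 + 1 = 2 * (k + 1) by ring]
    simp only [biregularSeq_two_mul, biregularSeq_two_mul_add_one, geom_sum_succ, mul_comm b a]
    ring

theorem eq_biregularSeq_of_recurrence (a b : A) (R1 R2 : ℕ → A)
    (h11 : R1 1 = a + 1) (h21 : R2 1 = b + 1)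
    (h12 : R1 2 = (a + 1) * b + 1) (h22 : R2 2 = (b + 1) * a + 1)
    (hr1 : ∀ h, 3 ≤ h → R1 h = (a + 1) * R2 (h - 1) - a * R1 (h - 2))
    (hr2 : ∀ h, 3 ≤ h → R2 h = (b + 1) * R1 (h - 1) - b * R2 (h - 2)) {h : ℕ} (hh : 1 ≤ h) :
    R1 h = biregularSeq a b h ∧ R2 h = biregularSeq b a h := by
  suffices key : ∀ n,
      R1 (n + 1) = biregularSeq a b (n + 1) ∧ R1 (n + 2) = biregularSeq a b (n + 2) ∧
        R2 (n + 1) = biregularSeq b a (n + 1) ∧ R2 (n + 2) = biregularSeq b a (n + 2) by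
    obtain ⟨n, rfl⟩ := Nat.exists_eq_add_of_le' hh
    exact ⟨(key n).1, (key n).2.2.1⟩
  intro n
  induction n with
  | zero => simp [biregularSeq, h11, h12, h21, h22]
  | succ n ih =>
    obtain ⟨e1, e2, f1, f2⟩ := ih
    refine ⟨e2, ?_, f2, ?_⟩
    · rw [hr1 (n + 1 + 2) (by omega), biregularSeq_add_two, Nat.add_sub_cancel,
        show n + 1 + 2 - 1 = n + 2 by omega, f2, e1]
    · rw [hr2 (n + 1 + 2) (by omega), biregularSeq_add_two, Nat.add_sub_cancel,
        show n + 1 + 2 - 1 = n + 2 by omega, e2, f1]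

end

theorem biregular_root_order_general (α β : ℕ)
    (hαβ : 1 < α * β) (R1 R2 : ℕ → ℤ)
    (h11 : R1 1 = α + 1) (h21 : R2 1 = β + 1)
    (h12 : R1 2 = (α + 1) * β + 1) (h22 : R2 2 = (β + 1) * α + 1)
    (hr1 : ∀ h, 3 ≤ h → R1 h = (α + 1) * R2 (h - 1) - α * R1 (h - 2))
    (hr2 : ∀ h, 3 ≤ h → R2 h = (β + 1) * R1 (h - 1) - β * R2 (h - 2)) :
    ∀ k, 1 ≤ k →
      ((R1 (2 * k) : ℚ) =
        (((α : ℚ) * β) ^ k - 1) / ((α : ℚ) * β - 1) * (α + 1) * β + 1) ∧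
      ((R1 (2 * k + 1) : ℚ) =
        (((α : ℚ) * β) ^ (k + 1) - 1) / ((α : ℚ) * β - 1) * (α + 1)) := by
  intro k hk
  have hq : (α : ℚ) * β ≠ 1 := by exact_mod_cast hαβ.ne'
  have closed (h : ℕ) (hh : 1 ≤ h) := (eq_biregularSeq_of_recurrence (α : ℚ) β
    (fun h ↦ (R1 h : ℚ)) (fun h ↦ (R2 h : ℚ)) (by exact_mod_cast h11) (by exact_mod_cast h21)
    (by exact_mod_cast h12) (by exact_mod_cast h22)
    (fun h h3 ↦ by simp [hr1 h h3]) (fun h h3 ↦ by simp [hr2 h h3]) hh).1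
  rw [closed (2 * k) (by omega), closed (2 * k + 1) (by omega)]
  simp only [biregularSeq_two_mul, biregularSeq_two_mul_add_one, geom_sum_eq hq, and_self]

/-- Explicit solution of the bi-regular tree recursion
`R^h_1 = (α+1) R^{h-1}_2 − α R^{h-2}_1`, `R^h_2 = (β+1) R^{h-1}_1 − β R^{h-2}_2`
with initial values `R^1_1 = α+1`, `R^1_2 = β+1`, `R^2_1 = (α+1)β+1`,
`R^2_2 = (β+1)α+1`:
`R^{2k}_1 = ((αβ)^k − 1)/(αβ − 1) · (α+1)β + 1` and
`R^{2k+1}_1 = ((αβ)^{k+1} − 1)/(αβ − 1) · (α+1)`. -/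
theorem biregular_root_order (α β : ℕ) (hα : 1 ≤ α) (hβ : 1 ≤ β)
    (hαβ : 1 < α * β) (R1 R2 : ℕ → ℤ)
    (h11 : R1 1 = α + 1) (h21 : R2 1 = β + 1)
    (h12 : R1 2 = (α + 1) * β + 1) (h22 : R2 2 = (β + 1) * α + 1)
    (hr1 : ∀ h, 3 ≤ h → R1 h = (α + 1) * R2 (h - 1) - α * R1 (h - 2))
    (hr2 : ∀ h, 3 ≤ h → R2 h = (β + 1) * R1 (h - 1) - β * R2 (h - 2)) :
    ∀ k, 1 ≤ k →
      ((R1 (2 * k) : ℚ) =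
        (((α : ℚ) * β) ^ k - 1) / ((α : ℚ) * β - 1) * (α + 1) * β + 1) ∧
      ((R1 (2 * k + 1) : ℚ) =
        (((α : ℚ) * β) ^ (k + 1) - 1) / ((α : ℚ) * β - 1) * (α + 1)) :=
  biregular_root_order_general α β hαβ R1 R2 h11 h21 h12 h22 hr1 hr2
end
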